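/- arXiv:2402.08625 — 8 statements merged into one kernel-verified Lean document; each statement's English description precedes it below -/
import Mathlib

section
/- Let n ≥ 1 and let P be an invertible pairing involution on Fin 3 × Fin (2n). Assume that in the presented group Γ_P the images a₁, a₂, a₃ of the three generators indexed by Fin 3 are pairwise distinct, and the images b₁, …, b_{2n} of the generators indexed by Fin (2n) are pairwise distinct. Then Γ_P contains a nontrivial element of finite order, i.e., there exists g ∈ Γ_P with g ≠ 1 and IsOfFinOrder g. -/
/-- The relator set of the group `Γ_P` associated to a pairing involution `P`:
for every cell `(i,j)` with `P (i,j) = (i',j')` we take the relator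
`aᵢ bⱼ bⱼ'⁻¹ aᵢ'⁻¹`, imposing the relation `aᵢ bⱼ = aᵢ' bⱼ'`. -/
def pairingRels {n m : ℕ} (P : Fin n × Fin m → Fin n × Fin m) :
    Set (FreeGroup (Fin n ⊕ Fin m)) :=
  {r | ∃ p : Fin n × Fin m,
    r = FreeGroup.of (Sum.inl p.1) * FreeGroup.of (Sum.inr p.2) *
        (FreeGroup.of (Sum.inr (P p).2))⁻¹ * (FreeGroup.of (Sum.inl (P p).1))⁻¹}

/-!
Write `aᵢ`, `bⱼ` for the generators of `Γ_P` and `σᵢ j = (P (i, j)).2`. By invertibility each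
`σᵢ` is a permutation of the columns, and it also forces the rows of the partners of the three
cells of a column `j` to be distinct, so `i ↦ (P (i, j)).1` is a 3-cycle `f_j` of the rows. The
relation of the cell `(i, j)` reads `b_{σᵢ j} = a_{f_j i}⁻¹ aᵢ b_j`, and the cycle of the column
`σᵢ j` is `f_j⁻¹ = f_j²`. Hence `σᵢ²` preserves `f = f_j` and multiplies `b_j` on the left by
the fixed element `wᵢ = a_{f² i}⁻¹ aᵢ a_{f i}⁻¹ aᵢ`; as `σᵢ²` has finite order, so does `wᵢ`.
If `w₀` and `w_{f 0}` are both trivial, then `(a₀⁻¹ a_{f 0})³ = 1`, and `a₀ ≠ a_{f 0}`.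
-/

open Function

theorem fin_three_apply_apply_apply {f : Fin 3 → Fin 3} (hf : Injective f)
    (hfix : ∀ i, f i ≠ i) (i : Fin 3) : f (f (f i)) = i := by
  revert f i; decide

theorem fin_three_eq_comp_of_apply_eq {f g : Fin 3 → Fin 3} (hf : Injective f)
    (hfix : ∀ i, f i ≠ i) (hg : Injective g) (hgfix : ∀ i, g i ≠ i) {i : Fin 3}
    (h : g (f i) = i) : g = f ∘ f := by
  revert f g i; decide

theorem isOfFinOrder_of_mapsTo_of_apply_eq_mul {α G : Type*} [Finite α] [Group G]
    {τ : α → α} (hτ : Injective τ) {S : Set α} (hS : Set.MapsTo τ S S) (b : α → G) {w : G}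
    (hb : ∀ j ∈ S, b (τ j) = w * b j) {j₀ : α} (hj₀ : j₀ ∈ S) : IsOfFinOrder w := by
  obtain ⟨N, hN, hperiodic⟩ := mem_periodicPts.mp (hτ.mem_periodicPts j₀)
  have walk : ∀ t, τ^[t] j₀ ∈ S ∧ b (τ^[t] j₀) = w ^ t * b j₀ := by
    intro t
    induction t with
    | zero => simpa using hj₀
    | succ t ih =>
      rw [iterate_succ_apply', hb _ ih.1, ih.2, pow_succ', mul_assoc]
      exact ⟨hS ih.1, rfl⟩
  have hbN := (walk N).2
  rw [hperiodic.eq] at hbN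
  exact isOfFinOrder_iff_pow_eq_one.mpr ⟨N, hN, mul_eq_right.mp hbN.symm⟩

theorem exists_ne_one_isOfFinOrder_of_ne {G : Type*} [Group G] {x y z : G}
    (hxy : x ≠ y) (h₁ : IsOfFinOrder (z⁻¹ * x * (y⁻¹ * x)))
    (h₂ : IsOfFinOrder (x⁻¹ * y * (z⁻¹ * y))) : ∃ g : G, g ≠ 1 ∧ IsOfFinOrder g := by
  by_cases hr₁ : z⁻¹ * x * (y⁻¹ * x) = 1
  · by_cases hr₂ : x⁻¹ * y * (z⁻¹ * y) = 1
    · refine ⟨x⁻¹ * y, by rwa [Ne, inv_mul_eq_one], isOfFinOrder_iff_pow_eq_one.mpr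
        ⟨3, by norm_num, ?_⟩⟩
      have hcube : (x⁻¹ * y) ^ 3 = (z⁻¹ * x * (y⁻¹ * x))⁻¹ *
          ((x⁻¹ * y)⁻¹ * (x⁻¹ * y * (z⁻¹ * y)) * (x⁻¹ * y)) := by
        rw [pow_succ, pow_two]
        group
      rw [hcube, hr₁, hr₂]
      group
    · exact ⟨_, hr₂, h₂⟩
  · exact ⟨_, hr₁, h₁⟩

section Pairing

variable {k m : ℕ}

def partnerRow (P : Fin k × Fin m → Fin k × Fin m) (j : Fin m) : Fin k → Fin k :=
  fun i => (P (i, j)).1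

theorem partnerRow_injective {P : Fin k × Fin m → Fin k × Fin m}
    (hP_invol : ∀ p, P (P p) = p) (hP_invertible : ∀ i, Injective fun j => (P (i, j)).2)
    (j : Fin m) : Injective (partnerRow P j) := by
  intro i i' h
  -- the partners of `(i, j)` and `(i', j)` lie in one row and both have their partner in column `j`
  have hcol : (P (i, j)).2 = (P (i', j)).2 := by
    apply hP_invertible (P (i, j)).1
    dsimp only
    rw [Prod.mk.eta, hP_invol, show (P (i, j)).1 = (P (i', j)).1 from h, Prod.mk.eta, hP_invol]
  simpa [hP_invol] using congrArg P (Prod.ext h hcol)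

theorem partnerRow_partner_apply {P : Fin k × Fin m → Fin k × Fin m}
    (hP_invol : ∀ p, P (P p) = p) (i : Fin k) (j : Fin m) :
    partnerRow P (P (i, j)).2 (partnerRow P j i) = i := by
  rw [partnerRow, partnerRow, Prod.mk.eta, hP_invol]

theorem pairingRels_of_inr_partner (P : Fin k × Fin m → Fin k × Fin m) (i : Fin k)
    (j : Fin m) :
    (PresentedGroup.of (Sum.inr (P (i, j)).2) : PresentedGroup (pairingRels P)) =
      (PresentedGroup.of (Sum.inl (partnerRow P j i)))⁻¹ * PresentedGroup.of (Sum.inl i) *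
        PresentedGroup.of (Sum.inr j) := by
  have hrel : PresentedGroup.of (rels := pairingRels P) (Sum.inl i) *
      PresentedGroup.of (Sum.inr j) =
        PresentedGroup.of (Sum.inl (partnerRow P j i)) * PresentedGroup.of (Sum.inr (P (i, j)).2) :=
    PresentedGroup.mk_eq_mk_of_mul_inv_mem ⟨(i, j), by simp [partnerRow, mul_assoc]⟩
  rw [mul_assoc, hrel, inv_mul_cancel_left]

end Pairing

section ThreeRows

variable {m : ℕ} {P : Fin 3 × Fin m → Fin 3 × Fin m}

theorem partnerRow_partner_eq_comp (hP_invol : ∀ p, P (P p) = p)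
    (hP_row : ∀ p, (P p).1 ≠ p.1) (hP_invertible : ∀ i, Injective fun j => (P (i, j)).2)
    (i : Fin 3) (j : Fin m) :
    partnerRow P (P (i, j)).2 = partnerRow P j ∘ partnerRow P j :=
  fin_three_eq_comp_of_apply_eq (partnerRow_injective hP_invol hP_invertible _)
    (fun _ => hP_row _) (partnerRow_injective hP_invol hP_invertible _) (fun _ => hP_row _)
    (partnerRow_partner_apply hP_invol i j)

theorem isOfFinOrder_pairing_two_step (hP_invol : ∀ p, P (P p) = p)
    (hP_row : ∀ p, (P p).1 ≠ p.1) (hP_invertible : ∀ i, Injective fun j => (P (i, j)).2)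
    (j₀ : Fin m) (i : Fin 3) :
    IsOfFinOrder
      ((PresentedGroup.of (rels := pairingRels P)
          (Sum.inl (partnerRow P j₀ (partnerRow P j₀ i))))⁻¹ *
        PresentedGroup.of (Sum.inl i) *
        ((PresentedGroup.of (Sum.inl (partnerRow P j₀ i)))⁻¹ * PresentedGroup.of (Sum.inl i))) := by
  set σ : Fin m → Fin m := fun j => (P (i, j)).2
  have hcomp := partnerRow_partner_eq_comp hP_invol hP_row hP_invertible i
  have hσσ : ∀ j, partnerRow P (σ (σ j)) = partnerRow P j := fun j => by
    funext i'
    simp only [σ, hcomp, comp_apply]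
    exact congrArg _ (fin_three_apply_apply_apply
      (partnerRow_injective hP_invol hP_invertible j) (fun _ => hP_row _) i')
  refine isOfFinOrder_of_mapsTo_of_apply_eq_mul ((hP_invertible i).comp (hP_invertible i))
    (S := {j | partnerRow P j = partnerRow P j₀}) (fun j (hj : _ = _) => (hσσ j).trans hj)
    (fun j => PresentedGroup.of (Sum.inr j)) (fun j (hj : _ = _) => ?_) rfl
  simp only [comp_apply, pairingRels_of_inr_partner, hcomp, hj, mul_assoc]

end ThreeRows

theorem invertible_pairing_3x2n_has_torsion_general (n : ℕ) (hn : 1 ≤ n)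
    (P : Fin 3 × Fin (2 * n) → Fin 3 × Fin (2 * n))
    (hP_invol : ∀ p, P (P p) = p)
    (hP_row : ∀ p, (P p).1 ≠ p.1)
    (hP_invertible : ∀ i : Fin 3, Function.Injective (fun j : Fin (2 * n) => (P (i, j)).2))
    (ha : Function.Injective
      (fun i : Fin 3 => (PresentedGroup.of (rels := pairingRels P) (Sum.inl i)))) :
    ∃ g : PresentedGroup (pairingRels P), g ≠ 1 ∧ IsOfFinOrder g := by
  obtain ⟨j₀⟩ : Nonempty (Fin (2 * n)) := ⟨⟨0, by omega⟩⟩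
  have hw := isOfFinOrder_pairing_two_step hP_invol hP_row hP_invertible j₀
  set f := partnerRow P j₀
  have hf3 : f (f (f 0)) = 0 :=
    fin_three_apply_apply_apply (partnerRow_injective hP_invol hP_invertible _)
      (fun _ => hP_row _) 0
  have hf0 : f 0 ≠ 0 := hP_row _
  refine exists_ne_one_isOfFinOrder_of_ne (ha.ne hf0.symm) (hw 0) ?_
  simpa only [hf3] using hw (f 0)

/-- If `P` is an invertible pairing involution on `Fin 3 × Fin (2n)` and the images of
the generators `a₁, a₂, a₃` (resp. `b₁, …, b_{2n}`) in `Γ_P` are pairwise distinct, then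
`Γ_P` contains a nontrivial element of finite order. -/
theorem invertible_pairing_3x2n_has_torsion (n : ℕ) (hn : 1 ≤ n)
    (P : Fin 3 × Fin (2 * n) → Fin 3 × Fin (2 * n))
    (hP_invol : ∀ p, P (P p) = p)
    (hP_nofix : ∀ p, P p ≠ p)
    (hP_row : ∀ p, (P p).1 ≠ p.1)
    (hP_col : ∀ p, (P p).2 ≠ p.2)
    (hP_invertible : ∀ i : Fin 3, Function.Injective (fun j : Fin (2 * n) => (P (i, j)).2))
    (ha : Function.Injective
      (fun i : Fin 3 => (PresentedGroup.of (rels := pairingRels P) (Sum.inl i))))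
    (hb : Function.Injective
      (fun j : Fin (2 * n) => (PresentedGroup.of (rels := pairingRels P) (Sum.inr j)))) :
    ∃ g : PresentedGroup (pairingRels P), g ≠ 1 ∧ IsOfFinOrder g :=
  invertible_pairing_3x2n_has_torsion_general n hn P hP_invol hP_row hP_invertible ha
end

section
/- Let G be a group, n ≥ 1, let a : Fin 3 → G and b : Fin (2n) → G be injective maps, and let P be an invertible pairing involution on Fin 3 × Fin (2n) such that for every cell p = (i,j) one has a i * b j = a (P p).1 * b (P p).2. Then G contains a nontrivial element of finite order, i.e., there exists g ∈ G with g ≠ 1 and IsOfFinOrder g. -/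
/-!
Let `A` be the set of columns `j` whose row-`0` cell is paired with row `1`. Because each row map
`j ↦ (P (i, j)).2` is a bijection carrying the row-`i` cells paired with row `k` onto the row-`k`
cells paired with row `i`, and each row splits into two complementary such blocks, `A` is also the
set of row-`1` cells paired with row `2` and of row-`2` cells paired with row `0`. The relations
then say that `g₁ = a₁⁻¹a₀` and `g₃ = a₂⁻¹a₁` carry `b(A)` into `b(Aᶜ)` and `g₂ = a₂⁻¹a₀` carries
`b(Aᶜ)` back into `b(A)`, so `g₂g₁` and `g₂g₃` stabilise the finite nonempty set `b(A)` and have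
finite order. If both are trivial, then `g₁ = g₃ = g₂⁻¹` and `g₁³ = 1` with `g₁ ≠ 1`.
-/

open Function Set

lemma isOfFinOrder_of_mapsTo_mul_left {G : Type*} [Group G] {g : G} {S : Set G}
    (hS : S.Finite) (hne : S.Nonempty) (hg : MapsTo (g * ·) S S) : IsOfFinOrder g := by
  obtain ⟨s, hs⟩ := hne
  by_contra hfin
  have hinj : Injective fun m : ℕ => g ^ m * s :=
    (mul_left_injective s).comp (injective_pow_iff_not_isOfFinOrder.mpr hfin)
  refine infinite_of_injective_forall_mem hinj (fun m => ?_) hS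
  simpa only [mul_left_iterate_apply] using hg.iterate m hs

lemma exists_ne_one_isOfFinOrder_of_isOfFinOrder_mul {G : Type*} [Group G] {x y z : G}
    (hxy : x ≠ y) (h₁ : IsOfFinOrder (z⁻¹ * x * (y⁻¹ * x)))
    (h₂ : IsOfFinOrder (z⁻¹ * x * (z⁻¹ * y))) : ∃ g : G, g ≠ 1 ∧ IsOfFinOrder g := by
  by_cases e₁ : z⁻¹ * x * (y⁻¹ * x) = 1
  · by_cases e₂ : z⁻¹ * x * (z⁻¹ * y) = 1
    · have hy : y⁻¹ * x = z⁻¹ * y := mul_left_cancel (e₁.trans e₂.symm)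
      have hz : y⁻¹ * x = x⁻¹ * z := by
        rw [eq_inv_of_mul_eq_one_right e₁, mul_inv_rev, inv_inv]
      refine ⟨y⁻¹ * x, fun h => hxy (inv_mul_eq_one.mp h).symm,
        isOfFinOrder_iff_pow_eq_one.mpr ⟨3, by norm_num, ?_⟩⟩
      calc (y⁻¹ * x) ^ 3 = y⁻¹ * x * (x⁻¹ * z) * (z⁻¹ * y) := by
            rw [← hz, ← hy, pow_three']
        _ = 1 := by group
    · exact ⟨_, e₂, h₂⟩
  · exact ⟨_, e₁, h₁⟩

section RowBlock

variable {ι β : Type*} {P : ι × β → ι × β}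

variable (P) in
def rowBlock (i k : ι) : Set β := {j | (P (i, j)).1 = k}

lemma apply_partner_of_mem_rowBlock (hP : Involutive P) {i k : ι} {j : β}
    (hj : j ∈ rowBlock P i k) : P (k, (P (i, j)).2) = (i, j) := by
  have hpartner : P (i, j) = (k, (P (i, j)).2) := Prod.ext hj rfl
  rw [← hpartner, hP]

lemma image_rowBlock (hP : Involutive P) (i k : ι) :
    (fun j => (P (i, j)).2) '' rowBlock P i k = rowBlock P k i := by
  ext j'
  constructor
  · rintro ⟨j, hj, rfl⟩
    show (P (k, (P (i, j)).2)).1 = i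
    rw [apply_partner_of_mem_rowBlock hP hj]
  · intro hj'
    exact ⟨(P (k, j')).2, by simp [rowBlock, apply_partner_of_mem_rowBlock hP hj'],
      by simp [apply_partner_of_mem_rowBlock hP hj']⟩

lemma mapsTo_mul_image_rowBlock {G : Type*} [Group G] {a : ι → G} {b : β → G}
    (hP : Involutive P) (hrel : ∀ p, a p.1 * b p.2 = a (P p).1 * b (P p).2) (i k : ι) :
    MapsTo ((a k)⁻¹ * a i * ·) (b '' rowBlock P i k) (b '' rowBlock P k i) := by
  rintro _ ⟨j, hj, rfl⟩
  refine ⟨(P (i, j)).2, image_rowBlock hP i k ▸ mem_image_of_mem _ hj, ?_⟩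
  have hk : (P (i, j)).1 = k := hj
  simp only [mul_assoc, hrel (i, j), hk, inv_mul_cancel_left]

end RowBlock

section ThreeRows

variable {β : Type*} {P : Fin 3 × β → Fin 3 × β}

lemma compl_rowBlock (hrow : ∀ p, (P p).1 ≠ p.1) {i k l : Fin 3}
    (hik : i ≠ k) (hil : i ≠ l) (hkl : k ≠ l) : (rowBlock P i k)ᶜ = rowBlock P i l := by
  ext j
  simp only [rowBlock, mem_compl_iff, mem_ofPred_eq]
  have : (P (i, j)).1 ≠ i := hrow (i, j)
  omega

lemma rowBlock_rotate [Finite β] (hP : Involutive P) (hrow : ∀ p, (P p).1 ≠ p.1)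
    (hinj : ∀ i, Injective fun j => (P (i, j)).2) {i k l : Fin 3}
    (hik : i ≠ k) (hil : i ≠ l) (hkl : k ≠ l) : rowBlock P k l = rowBlock P l i := by
  have hbij : Bijective fun j => (P (i, j)).2 := Finite.injective_iff_bijective.mp (hinj i)
  calc rowBlock P k l = (rowBlock P k i)ᶜ := (compl_rowBlock hrow hik.symm hkl hil).symm
    _ = ((fun j => (P (i, j)).2) '' rowBlock P i k)ᶜ := by rw [image_rowBlock hP]
    _ = (fun j => (P (i, j)).2) '' rowBlock P i l := by
      rw [← image_compl_eq hbij, compl_rowBlock hrow hik hil hkl]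
    _ = rowBlock P l i := image_rowBlock hP i l

lemma rowBlock_nonempty [Finite β] [Nonempty β] (hP : Involutive P) (hrow : ∀ p, (P p).1 ≠ p.1)
    (hinj : ∀ i, Injective fun j => (P (i, j)).2) {i k : Fin 3} (hik : i ≠ k) :
    (rowBlock P i k).Nonempty := by
  obtain ⟨j⟩ := ‹Nonempty β›
  by_cases hj : (P (i, j)).1 = k
  · exact ⟨j, hj⟩
  · have hl : (P (i, j)).1 ≠ i := hrow (i, j)
    rw [← rowBlock_rotate hP hrow hinj (Ne.symm hj) (Ne.symm hik) hl, ← image_rowBlock hP i]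
    exact ⟨_, j, rfl, rfl⟩

end ThreeRows

theorem group_with_invertible_pairing_relations_has_torsion_general
    {G : Type*} [Group G] (n : ℕ) (hn : 1 ≤ n)
    (a : Fin 3 → G) (b : Fin (2 * n) → G)
    (ha : Function.Injective a)
    (P : Fin 3 × Fin (2 * n) → Fin 3 × Fin (2 * n))
    (hP_invol : ∀ p, P (P p) = p)
    (hP_row : ∀ p, (P p).1 ≠ p.1)
    (hP_invertible : ∀ i : Fin 3, Function.Injective (fun j : Fin (2 * n) => (P (i, j)).2))
    (hrel : ∀ p : Fin 3 × Fin (2 * n), a p.1 * b p.2 = a (P p).1 * b (P p).2) :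
    ∃ g : G, g ≠ 1 ∧ IsOfFinOrder g := by
  have : Nonempty (Fin (2 * n)) := ⟨⟨0, by omega⟩⟩
  have hmaps := mapsTo_mul_image_rowBlock (a := a) (b := b) hP_invol hrel
  have hrot {i k l : Fin 3} := rowBlock_rotate (i := i) (k := k) (l := l) hP_invol hP_row
    hP_invertible
  have h10 : rowBlock P 1 0 = rowBlock P 0 2 := hrot (i := 2) (by decide) (by decide) (by decide)
  have h20 : rowBlock P 2 0 = rowBlock P 0 1 := hrot (i := 1) (by decide) (by decide) (by decide)
  have h12 : rowBlock P 1 2 = rowBlock P 0 1 :=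
    (hrot (i := 2) (by decide) (by decide) (by decide)).symm
  have h21 : rowBlock P 2 1 = rowBlock P 0 2 :=
    (hrot (i := 1) (by decide) (by decide) (by decide)).symm
  have hg₁ : MapsTo ((a 1)⁻¹ * a 0 * ·) (b '' rowBlock P 0 1) (b '' rowBlock P 0 2) :=
    h10 ▸ hmaps 0 1
  have hg₂ : MapsTo ((a 2)⁻¹ * a 0 * ·) (b '' rowBlock P 0 2) (b '' rowBlock P 0 1) :=
    h20 ▸ hmaps 0 2
  have hg₃ : MapsTo ((a 2)⁻¹ * a 1 * ·) (b '' rowBlock P 0 1) (b '' rowBlock P 0 2) :=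
    h12 ▸ h21 ▸ hmaps 1 2
  have h₁ : MapsTo ((a 2)⁻¹ * a 0 * ((a 1)⁻¹ * a 0) * ·) (b '' rowBlock P 0 1)
      (b '' rowBlock P 0 1) := fun x hx => by
    simpa only [mul_assoc] using hg₂ (hg₁ hx)
  have h₂ : MapsTo ((a 2)⁻¹ * a 0 * ((a 2)⁻¹ * a 1) * ·) (b '' rowBlock P 0 1)
      (b '' rowBlock P 0 1) := fun x hx => by
    simpa only [mul_assoc] using hg₂ (hg₃ hx)
  have hSne : (b '' rowBlock P 0 1).Nonempty :=
    (rowBlock_nonempty hP_invol hP_row hP_invertible (by decide)).image b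
  exact exists_ne_one_isOfFinOrder_of_isOfFinOrder_mul (ha.ne (by decide))
    (isOfFinOrder_of_mapsTo_mul_left (toFinite _) hSne h₁)
    (isOfFinOrder_of_mapsTo_mul_left (toFinite _) hSne h₂)

/-- Group-level form of the main theorem: if a group `G` contains pairwise distinct
elements `a₁, a₂, a₃` and pairwise distinct `b₁, …, b_{2n}` satisfying the relations
of an invertible pairing involution `P` on `Fin 3 × Fin (2n)`, then `G` contains a
nontrivial element of finite order. -/
theorem group_with_invertible_pairing_relations_has_torsion
    {G : Type*} [Group G] (n : ℕ) (hn : 1 ≤ n)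
    (a : Fin 3 → G) (b : Fin (2 * n) → G)
    (ha : Function.Injective a) (hb : Function.Injective b)
    (P : Fin 3 × Fin (2 * n) → Fin 3 × Fin (2 * n))
    (hP_invol : ∀ p, P (P p) = p)
    (hP_nofix : ∀ p, P p ≠ p)
    (hP_row : ∀ p, (P p).1 ≠ p.1)
    (hP_col : ∀ p, (P p).2 ≠ p.2)
    (hP_invertible : ∀ i : Fin 3, Function.Injective (fun j : Fin (2 * n) => (P (i, j)).2))
    (hrel : ∀ p : Fin 3 × Fin (2 * n), a p.1 * b p.2 = a (P p).1 * b (P p).2) :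
    ∃ g : G, g ≠ 1 ∧ IsOfFinOrder g :=
  group_with_invertible_pairing_relations_has_torsion_general n hn a b ha P hP_invol hP_row
    hP_invertible hrel
end

section
/- Let G be a torsion-free group (every g ≠ 1 has infinite order), let n ≥ 1, and let a : Fin 3 → G and b : Fin (2n) → G be injective maps. Then there is no invertible pairing involution P on Fin 3 × Fin (2n) satisfying a p.1 * b p.2 = a (P p).1 * b (P p).2 for every cell p. In particular, there are no zero divisors of support three in 𝔽₂[G] whose cancellation pattern is given by an invertible pairing. -/
private lemma aux_stab_eq_one {G : Type*} [Group G]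
    (htf : ∀ g : G, g ≠ 1 → ¬ IsOfFinOrder g)
    (w : G) (T : Set G) (hfin : T.Finite) (hne : T.Nonempty)
    (hmap : ∀ x ∈ T, w * x ∈ T) : w = 1 := by
  by_contra hw
  obtain ⟨x₀, hx₀⟩ := hne
  have hpow : ∀ k : ℕ, w ^ k * x₀ ∈ T := by
    intro k
    induction k with
    | zero => simpa using hx₀
    | succ k ih =>
      have := hmap _ ih
      rwa [pow_succ', mul_assoc]
  obtain ⟨i, -, j, -, hij, heq⟩ :=
    Set.infinite_univ.exists_ne_map_eq_of_mapsTo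
      (f := fun k : ℕ => w ^ k * x₀) (fun k _ => hpow k) hfin
  have hpq : w ^ i = w ^ j := mul_right_cancel heq
  exact htf w hw (not_not.mp (fun hnf =>
    hij ((injective_pow_iff_not_isOfFinOrder.mpr hnf) hpq)))

/-- In a torsion-free group there are no elements `a₁, a₂, a₃` (distinct) and
`b₁, …, b_{2n}` (distinct) whose products cancel according to an invertible pairing
involution on `Fin 3 × Fin (2n)`; in particular there are no zero divisors of support
three in `𝔽₂[G]` whose cancellation pattern is given by an invertible pairing. -/
theorem torsion_free_no_invertible_pairing
    {G : Type*} [Group G] (htf : ∀ g : G, g ≠ 1 → ¬ IsOfFinOrder g)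
    (n : ℕ) (hn : 1 ≤ n)
    (a : Fin 3 → G) (b : Fin (2 * n) → G)
    (ha : Function.Injective a) (hb : Function.Injective b) :
    ¬ ∃ P : Fin 3 × Fin (2 * n) → Fin 3 × Fin (2 * n),
        (∀ p, P (P p) = p) ∧
        (∀ p, P p ≠ p) ∧
        (∀ p, (P p).1 ≠ p.1) ∧
        (∀ p, (P p).2 ≠ p.2) ∧
        (∀ i : Fin 3, Function.Injective (fun j : Fin (2 * n) => (P (i, j)).2)) ∧
        (∀ p : Fin 3 × Fin (2 * n), a p.1 * b p.2 = a (P p).1 * b (P p).2) := by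
  rintro ⟨P, hinv, hfp, hrow, hcolne, hperm, hmul⟩
  clear hfp hcolne
  -- involution applied with explicit components
  have hback : ∀ q : Fin 3 × Fin (2 * n), P ((P q).1, (P q).2) = q := by
    intro q; rw [Prod.mk.eta]; exact hinv q
  -- column injectivity of the row map
  have colinj : ∀ (j : Fin (2 * n)) (i1 i2 : Fin 3),
      (P (i1, j)).1 = (P (i2, j)).1 → i1 = i2 := by
    intro j i1 i2 hEq
    have k1 := hback (i1, j)
    have k2 := hback (i2, j)
    rw [← hEq] at k2
    have hc : (P ((P (i1, j)).1, (P (i1, j)).2)).2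
        = (P ((P (i1, j)).1, (P (i2, j)).2)).2 := by rw [k1, k2]
    have := hperm ((P (i1, j)).1) hc
    rw [this] at k1
    rw [k2] at k1
    exact (Prod.ext_iff.mp k1).1.symm
  have tri : ∀ i : Fin 3, i = 0 ∨ i = 1 ∨ i = 2 := by decide
  -- each column is of type + (0→1,1→2,2→0) or type − (0→2,1→0,2→1)
  have htype : ∀ j : Fin (2 * n),
      ((P (0, j)).1 = 1 ∧ (P (1, j)).1 = 2 ∧ (P (2, j)).1 = 0)
      ∨ ((P (0, j)).1 = 2 ∧ (P (1, j)).1 = 0 ∧ (P (2, j)).1 = 1) := by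
    intro j
    have h0 := hrow (0, j)
    have h1 := hrow (1, j)
    have h2 := hrow (2, j)
    have d01 : (P (0, j)).1 ≠ (P (1, j)).1 := fun h => by
      have := colinj j 0 1 h; exact absurd this (by decide)
    have d02 : (P (0, j)).1 ≠ (P (2, j)).1 := fun h => by
      have := colinj j 0 2 h; exact absurd this (by decide)
    have d12 : (P (1, j)).1 ≠ (P (2, j)).1 := fun h => by
      have := colinj j 1 2 h; exact absurd this (by decide)
    rcases tri (P (0, j)).1 with e0 | e0 | e0 <;>
      rcases tri (P (1, j)).1 with e1 | e1 | e1 <;>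
      rcases tri (P (2, j)).1 with e2 | e2 | e2 <;>
      first
        | exact Or.inl ⟨e0, e1, e2⟩
        | exact Or.inr ⟨e0, e1, e2⟩
        | exact absurd e0 h0
        | exact absurd e1 h1
        | exact absurd e2 h2
        | exact absurd (e0.trans e1.symm) d01
        | exact absurd (e0.trans e2.symm) d02
        | exact absurd (e1.trans e2.symm) d12
  set g : G := (a 0)⁻¹ * a 1 with hg
  set h : G := (a 0)⁻¹ * a 2 with hh
  set T : Set G := {x | ∃ j, (P (0, j)).1 = 1 ∧ b j = x} with hT
  -- T is finite
  have hfin : T.Finite := by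
    apply (Set.finite_range b).subset
    rintro x ⟨j, -, hbj⟩
    exact ⟨j, hbj⟩
  -- T is nonempty
  have hne : T.Nonempty := by
    have hpos : 0 < 2 * n := by omega
    set j0 : Fin (2 * n) := ⟨0, hpos⟩
    rcases htype j0 with ⟨e, -, -⟩ | ⟨e, -, -⟩
    · exact ⟨b j0, j0, e, rfl⟩
    · have k := hback (0, j0)
      rw [e] at k
      refine ⟨b ((P (0, j0)).2), (P (0, j0)).2, ?_, rfl⟩
      rcases htype ((P (0, j0)).2) with ⟨e', -, -⟩ | ⟨-, -, e'⟩
      · exact e'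
      · rw [k] at e'; exact absurd (show (0 : Fin 3) = 1 from e') (by decide)
  -- stability under g * h
  have stabA : ∀ x ∈ T, (g * h) * x ∈ T := by
    rintro x ⟨j, hj, rfl⟩
    obtain ⟨-, -, h20⟩ | ⟨h02, -, -⟩ := htype j
    · have m1 : a 2 * b j = a 0 * b ((P (2, j)).2) := by
        have := hmul (2, j); rw [h20] at this; exact this
      have hb1 : P (0, (P (2, j)).2) = (2, j) := by
        have := hback (2, j); rw [h20] at this; exact this
      set j0 := (P (2, j)).2 with hj0
      have t1 : (P (1, j0)).1 = 0 := by
        rcases htype j0 with ⟨u, -, -⟩ | ⟨-, u, -⟩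
        · rw [hb1] at u; exact absurd (show (2 : Fin 3) = 1 from u) (by decide)
        · exact u
      have m2 : a 1 * b j0 = a 0 * b ((P (1, j0)).2) := by
        have := hmul (1, j0); rw [t1] at this; exact this
      have hb2 : P (0, (P (1, j0)).2) = (1, j0) := by
        have := hback (1, j0); rw [t1] at this; exact this
      refine ⟨(P (1, j0)).2, by rw [hb2], ?_⟩
      have e1 : b j0 = h * b j := by
        rw [hh, mul_assoc, m1, inv_mul_cancel_left]
      have e2 : b ((P (1, j0)).2) = g * b j0 := by
        rw [hg, mul_assoc, m2, inv_mul_cancel_left]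
      rw [e2, e1, ← mul_assoc]
    · rw [hj] at h02; exact absurd h02 (by decide)
  -- stability under h⁻¹ * (h⁻¹ * g)
  have stabB : ∀ x ∈ T, (h⁻¹ * (h⁻¹ * g)) * x ∈ T := by
    rintro x ⟨j, hj, rfl⟩
    obtain ⟨-, h12, -⟩ | ⟨h02, -, -⟩ := htype j
    · have m1 : a 1 * b j = a 2 * b ((P (1, j)).2) := by
        have := hmul (1, j); rw [h12] at this; exact this
      have hb1 : P (2, (P (1, j)).2) = (1, j) := by
        have := hback (1, j); rw [h12] at this; exact this
      set j2 := (P (1, j)).2 with hj2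
      have t1 : (P (0, j2)).1 = 2 := by
        rcases htype j2 with ⟨-, -, u⟩ | ⟨u, -, -⟩
        · rw [hb1] at u; exact absurd (show (1 : Fin 3) = 0 from u) (by decide)
        · exact u
      have m2 : a 0 * b j2 = a 2 * b ((P (0, j2)).2) := by
        have := hmul (0, j2); rw [t1] at this; exact this
      have hb2 : P (2, (P (0, j2)).2) = (0, j2) := by
        have := hback (0, j2); rw [t1] at this; exact this
      refine ⟨(P (0, j2)).2, ?_, ?_⟩
      · rcases htype ((P (0, j2)).2) with ⟨u, -, -⟩ | ⟨-, -, u⟩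
        · exact u
        · rw [hb2] at u; exact absurd (show (0 : Fin 3) = 1 from u) (by decide)
      · have e1 : b j2 = (h⁻¹ * g) * b j := by
          have : h⁻¹ * g = (a 2)⁻¹ * a 1 := by
            rw [hg, hh]; group
          rw [this, mul_assoc, m1, inv_mul_cancel_left]
        have e2 : b ((P (0, j2)).2) = h⁻¹ * b j2 := by
          rw [hh, mul_inv_rev, inv_inv, mul_assoc, m2, inv_mul_cancel_left]
        rw [e2, e1, ← mul_assoc]
    · rw [hj] at h02; exact absurd h02 (by decide)
  have w1 : g * h = 1 := aux_stab_eq_one htf _ T hfin hne stabA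
  have w2 : h⁻¹ * (h⁻¹ * g) = 1 := aux_stab_eq_one htf _ T hfin hne stabB
  -- from w2 : g = h * h; from w1 : g = h⁻¹; hence h ^ 3 = 1
  have hg_eq : g = h * h := by
    have := w2
    rw [← mul_assoc] at this
    calc g = (h * h) * ((h⁻¹ * h⁻¹) * g) := by group
    _ = (h * h) * 1 := by rw [this]
    _ = h * h := mul_one _
  have h3 : h ^ 3 = 1 := by
    have : h * h * h = 1 := by rw [← hg_eq, w1]  -- careful: w1 is g*h
    calc h ^ 3 = h * h * h := by rw [pow_succ, pow_two]
    _ = 1 := this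
  have hfo : IsOfFinOrder h := isOfFinOrder_iff_pow_eq_one.mpr ⟨3, by norm_num, h3⟩
  have hone : h = 1 := by
    by_contra hne'
    exact htf h hne' hfo
  have : a 0 = a 2 := by
    have := hone
    rw [hh] at this
    calc a 0 = a 0 * ((a 0)⁻¹ * a 2) := by rw [this, mul_one]
    _ = a 2 := by group
  exact absurd (ha this) (by decide)
end

section
/- Let S and X be finite types, let μ : S → X → S and ν : S → X → X be the transition and output maps of a Mealy automaton, assume the automaton is invertible (for every s ∈ S the map ν s : X → X is a bijection), and let F : S × X → S × X be defined by F (s,x) = (μ s x, ν s x) (the helix graph is the functional graph of F); assume F is bijective. Then the following are equivalent: (a) for all s and x one has μ s x ≠ s (no loops) and ν s x ≠ x (no arrows of the form s →^{x|x} t), and F (F p) = p for all p (the helix graph consists of cycles of length two); (b) the automaton corresponds to a pairing matrix, i.e., there exists c : S × X → ℕ such that for all p q : S × X one has (p ≠ q ∧ c p = c q) ↔ F p = q, and c has no repeated values in any row or column (for all p ≠ q with p.1 = q.1 or p.2 = q.2 one has c p ≠ c q). -/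
/-!
A labelling `c` pairs the cells along `F` exactly when `F` is a fixed-point-free involution:
such an involution splits the cells into two-element orbits `{p, F p}`, and numbering the
orbits gives `c`. The repeated values of `c` then sit exactly at the pairs `(p, F p)`, so `c`
repeats no value in a row (column) iff no arrow keeps its state (letter), i.e. iff there are
no loops and no arrows `s →^{x|x} t`.
-/

open Function

section

variable {α β : Type*}

/-- `c`, read as a matrix indexed by the cells, is a pairing matrix with helix map `F`. -/
def PairsAlong (c : α → β) (F : α → α) : Prop :=
  ∀ p q, (p ≠ q ∧ c p = c q) ↔ F p = q

namespace PairsAlong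

variable {c : α → β} {F : α → α}

theorem ne_apply_and_eq (h : PairsAlong c F) (p : α) : p ≠ F p ∧ c p = c (F p) :=
  (h p (F p)).2 rfl

theorem involutive (h : PairsAlong c F) : Involutive F := fun p =>
  (h (F p) p).1 ⟨(h.ne_apply_and_eq p).1.symm, (h.ne_apply_and_eq p).2.symm⟩

theorem forall_ne_iff (h : PairsAlong c F) (R : α → α → Prop) :
    (∀ p q, p ≠ q → R p q → c p ≠ c q) ↔ ∀ p, ¬ R p (F p) := by
  refine ⟨fun H p hR => H p (F p) (h.ne_apply_and_eq p).1 hR (h.ne_apply_and_eq p).2, ?_⟩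
  intro H p q hpq hR hc
  obtain rfl := (h p q).1 ⟨hpq, hc⟩
  exact H p hR

end PairsAlong

theorem Function.Involutive.exists_pairsAlong [Countable α] {F : α → α} (hF : Involutive F)
    (hfix : ∀ p, F p ≠ p) : ∃ c : α → ℕ, PairsAlong c F := by
  obtain ⟨e, he⟩ := exists_injective_nat (Sym2 α)
  refine ⟨fun p => e s(p, F p), fun p q => ⟨?_, ?_⟩⟩
  · rintro ⟨hpq, hc⟩
    rcases Sym2.eq_iff.1 (he hc) with ⟨rfl, -⟩ | ⟨rfl, hq⟩
    · exact absurd rfl hpq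
    · exact hq
  · rintro rfl
    exact ⟨(hfix p).symm, congrArg e (by rw [hF p, Sym2.eq_swap])⟩

end

theorem bireversible_corresponds_to_pairing_iff_general
    {S X : Type*} [Finite S] [Finite X]
    (μ : S → X → S) (ν : S → X → X)
    (F : S × X → S × X)
    (hF : ∀ p : S × X, F p = (μ p.1 p.2, ν p.1 p.2)) :
    ((∀ (s : S) (x : X), μ s x ≠ s) ∧ (∀ (s : S) (x : X), ν s x ≠ x) ∧
        (∀ p : S × X, F (F p) = p)) ↔
      (∃ c : S × X → ℕ,
        (∀ p q : S × X, (p ≠ q ∧ c p = c q) ↔ F p = q) ∧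
        (∀ p q : S × X, p ≠ q → (p.1 = q.1 ∨ p.2 = q.2) → c p ≠ c q)) := by
  constructor
  · rintro ⟨hμ, hν, hinvol⟩
    have hfix (p : S × X) : F p ≠ p := fun h =>
      hμ p.1 p.2 (by simpa [hF] using congrArg Prod.fst h)
    obtain ⟨c, hc⟩ := Involutive.exists_pairsAlong hinvol hfix
    refine ⟨c, hc, (hc.forall_ne_iff _).2 fun p => ?_⟩
    rw [hF]
    exact not_or.2 ⟨(hμ p.1 p.2).symm, (hν p.1 p.2).symm⟩
  · rintro ⟨c, hc, hrc⟩
    have hmoves := (PairsAlong.forall_ne_iff hc _).1 hrc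
    refine ⟨fun s x h => hmoves (s, x) (Or.inl ?_), fun s x h => hmoves (s, x) (Or.inr ?_),
      PairsAlong.involutive hc⟩ <;> simp [hF, h]

/-- A bireversible Mealy automaton (given by transition map `μ`, output map `ν`, with
each `ν s` a bijection and the helix map `F (s,x) = (μ s x, ν s x)` bijective)
corresponds to a pairing matrix if and only if it has no loops, no arrows of the form
`s →^{x|x} t`, and its helix graph consists of cycles of length two. -/
theorem bireversible_corresponds_to_pairing_iff
    {S X : Type*} [Finite S] [Finite X]
    (μ : S → X → S) (ν : S → X → X)
    (hinv : ∀ s : S, Function.Bijective (ν s))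
    (F : S × X → S × X)
    (hF : ∀ p : S × X, F p = (μ p.1 p.2, ν p.1 p.2))
    (hFbij : Function.Bijective F) :
    ((∀ (s : S) (x : X), μ s x ≠ s) ∧ (∀ (s : S) (x : X), ν s x ≠ x) ∧
        (∀ p : S × X, F (F p) = p)) ↔
      (∃ c : S × X → ℕ,
        (∀ p q : S × X, (p ≠ q ∧ c p = c q) ↔ F p = q) ∧
        (∀ p q : S × X, p ≠ q → (p.1 = q.1 ∨ p.2 = q.2) → c p ≠ c q)) :=
  bireversible_corresponds_to_pairing_iff_general μ ν F hF
end

section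
/- Let P be a pairing involution on Fin n × Fin m, let k ≥ 1, let s : ZMod k → Fin n be a cyclic sequence of states, and let x, y : Fin m be letters such that P (s t, x) = (s (t+1), y) for every t : ZMod k (i.e., the automaton A_C has a cycle of arrows s_t →^{x|y} s_{t+1} of length k). Then in the presented group Γ_P one has (b_y * (b_x)⁻¹)^k = 1. -/
theorem pairingRels_of_mul_of {n m : ℕ} (P : Fin n × Fin m → Fin n × Fin m)
    (p : Fin n × Fin m) :
    PresentedGroup.of (rels := pairingRels P) (Sum.inl p.1) * PresentedGroup.of (Sum.inr p.2) =
      PresentedGroup.of (Sum.inl (P p).1) * PresentedGroup.of (Sum.inr (P p).2) :=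
  PresentedGroup.mk_eq_mk_of_mul_inv_mem ⟨p, by rw [mul_inv_rev, ← mul_assoc]⟩

theorem mul_pow_eq_of_forall_succ_mul_eq {G : Type*} [Monoid G] {k : ℕ} (a : ZMod k → G)
    {c : G} (h : ∀ t, a (t + 1) * c = a t) (t : ZMod k) (j : ℕ) :
    a (t + j) * c ^ j = a t := by
  induction j with
  | zero => simp
  | succ j ih => rw [pow_succ', ← mul_assoc, Nat.cast_succ, ← add_assoc, h, ih]

theorem pow_eq_one_of_forall_succ_mul_eq {G : Type*} [Group G] {k : ℕ} (a : ZMod k → G)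
    {c : G} (h : ∀ t, a (t + 1) * c = a t) : c ^ k = 1 := by
  have around := mul_pow_eq_of_forall_succ_mul_eq a h 0 k
  rwa [ZMod.natCast_self, add_zero, mul_eq_left] at around

theorem cycle_gives_torsion_letters_general {n m : ℕ}
    (P : Fin n × Fin m → Fin n × Fin m)
    (k : ℕ)
    (s : ZMod k → Fin n) (x y : Fin m)
    (hcycle : ∀ t : ZMod k, P (s t, x) = (s (t + 1), y)) :
    (PresentedGroup.of (rels := pairingRels P) (Sum.inr y) *
      (PresentedGroup.of (rels := pairingRels P) (Sum.inr x))⁻¹) ^ k = 1 := by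
  refine pow_eq_one_of_forall_succ_mul_eq (fun t => PresentedGroup.of (Sum.inl (s t))) fun t => ?_
  have arrow := pairingRels_of_mul_of P (s t, x)
  rw [hcycle t] at arrow
  rw [← mul_assoc, ← arrow, mul_inv_cancel_right]

/-- If the automaton `A_C` associated to a pairing involution `P` has a cycle of length
`k` of arrows `s_t →^{x|y} s_{t+1}`, then `(b_y b_x⁻¹)^k = 1` in `Γ_P`. -/
theorem cycle_gives_torsion_letters {n m : ℕ}
    (P : Fin n × Fin m → Fin n × Fin m)
    (hP_invol : ∀ p, P (P p) = p)
    (hP_nofix : ∀ p, P p ≠ p)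
    (hP_row : ∀ p, (P p).1 ≠ p.1)
    (hP_col : ∀ p, (P p).2 ≠ p.2)
    (k : ℕ) (hk : 1 ≤ k)
    (s : ZMod k → Fin n) (x y : Fin m)
    (hcycle : ∀ t : ZMod k, P (s t, x) = (s (t + 1), y)) :
    (PresentedGroup.of (rels := pairingRels P) (Sum.inr y) *
      (PresentedGroup.of (rels := pairingRels P) (Sum.inr x))⁻¹) ^ k = 1 :=
  cycle_gives_torsion_letters_general P k s x y hcycle
end

section
/- Let n ≥ 1 and let P be an invertible pairing involution on Fin 3 × Fin (2n). Then the matrix admits a cyclic-bipartite structure: there exist a bijection σ : ZMod 3 ≃ Fin 3 (an ordering of the rows) and a finite set A ⊆ Fin (2n) of columns with A.card = n such that for every i : ZMod 3 and every column x ∈ A, the partner (P (σ i, x)) has first coordinate σ (i+1) and second coordinate not in A. (Equivalently, after permuting rows and columns and relabeling coefficients, C has the block form whose first row is (1,…,n, n+1,…,2n), whose second row begins (2n+1,…,3n) followed by a permutation of (1,…,n), and whose third row is a permutation of (n+1,…,2n) followed by a permutation of (2n+1,…,3n).) -/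
/-- Every invertible pairing involution on `Fin 3 × Fin (2n)` admits a cyclic-bipartite
structure: there is an ordering `σ` of the three rows and a set `A` of `n` columns such
that the partner of any cell in row `σ i` with column in `A` lies in row `σ (i+1)` with
column outside `A`. -/
theorem invertible_pairing_3x2n_cyclic_bipartite (n : ℕ) (hn : 1 ≤ n)
    (P : Fin 3 × Fin (2 * n) → Fin 3 × Fin (2 * n))
    (hP_invol : ∀ p, P (P p) = p)
    (hP_nofix : ∀ p, P p ≠ p)
    (hP_row : ∀ p, (P p).1 ≠ p.1)
    (hP_col : ∀ p, (P p).2 ≠ p.2)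
    (hP_invertible : ∀ i : Fin 3, Function.Injective (fun j : Fin (2 * n) => (P (i, j)).2)) :
    ∃ (σ : ZMod 3 ≃ Fin 3) (A : Finset (Fin (2 * n))),
      A.card = n ∧
      ∀ (i : ZMod 3) (x : Fin (2 * n)), x ∈ A →
        (P (σ i, x)).1 = σ (i + 1) ∧ (P (σ i, x)).2 ∉ A := by
  classical
  have hpair : ∀ (i : Fin 3) (j : Fin (2*n)), P ((P (i,j)).1, (P (i,j)).2) = (i,j) := by
    intro i j
    have := hP_invol (i, j)
    rwa [show ((P (i,j)).1, (P (i,j)).2) = P (i,j) from rfl]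
  have hrow_inj : ∀ (j : Fin (2*n)) (a b c : Fin 3),
      (P (b,j)).1 = a → (P (c,j)).1 = a → b = c := by
    intro j a b c hb hc
    have h1 : P (a, (P (b,j)).2) = (b, j) := by rw [← hb]; exact hpair b j
    have h2 : P (a, (P (c,j)).2) = (c, j) := by rw [← hc]; exact hpair c j
    have hcol : (P (b,j)).2 = (P (c,j)).2 := by
      apply hP_invertible a
      show (P (a, (P (b,j)).2)).2 = (P (a, (P (c,j)).2)).2
      rw [h1, h2]
    have hbc : (b, j) = (c, j) := by rw [← h1, ← h2, hcol]
    exact congrArg Prod.fst hbc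
  have fin3 : ∀ a b c : Fin 3, a ≠ 0 → b ≠ 1 → c ≠ 2 → a ≠ b → a ≠ c → b ≠ c →
      (a = 1 ∧ b = 2 ∧ c = 0) ∨ (a = 2 ∧ b = 0 ∧ c = 1) := by decide
  have htype : ∀ j, ((P (0,j)).1 = 1 ∧ (P (1,j)).1 = 2 ∧ (P (2,j)).1 = 0) ∨
      ((P (0,j)).1 = 2 ∧ (P (1,j)).1 = 0 ∧ (P (2,j)).1 = 1) := by
    intro j
    refine fin3 _ _ _ (hP_row (0,j)) (hP_row (1,j)) (hP_row (2,j)) ?_ ?_ ?_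
    · intro h; exact absurd (hrow_inj j _ 0 1 rfl h.symm) (by decide)
    · intro h; exact absurd (hrow_inj j _ 0 2 rfl h.symm) (by decide)
    · intro h; exact absurd (hrow_inj j _ 1 2 rfl h.symm) (by decide)
  set A : Finset (Fin (2*n)) := Finset.univ.filter (fun j => (P ((0:Fin 3), j)).1 = 1) with hA
  have memA : ∀ j, j ∈ A ↔ (P ((0:Fin 3),j)).1 = 1 := by
    intro j; simp [hA]
  have hplus : ∀ j ∈ A, (P (0,j)).1 = 1 ∧ (P (1,j)).1 = 2 ∧ (P (2,j)).1 = 0 := by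
    intro j hj
    rcases htype j with h | h
    · exact h
    · have := (memA j).1 hj
      rw [h.1] at this
      exact absurd this (by decide)
  have hminus : ∀ j ∉ A, (P (0,j)).1 = 2 ∧ (P (1,j)).1 = 0 ∧ (P (2,j)).1 = 1 := by
    intro j hj
    rcases htype j with h | h
    · exact absurd ((memA j).2 h.1) hj
    · exact h
  have flip0 : ∀ j ∈ A, (P ((0:Fin 3),j)).2 ∉ A := by
    intro j hj hk
    have h2 : P ((1:Fin 3), (P ((0:Fin 3),j)).2) = (0, j) := by
      rw [← (hplus j hj).1]; exact hpair 0 j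
    have := (hplus _ hk).2.1
    rw [h2] at this
    simp at this
  have flip1 : ∀ j ∈ A, (P ((1:Fin 3),j)).2 ∉ A := by
    intro j hj hk
    have h2 : P ((2:Fin 3), (P ((1:Fin 3),j)).2) = (1, j) := by
      rw [← (hplus j hj).2.1]; exact hpair 1 j
    have := (hplus _ hk).2.2
    rw [h2] at this
    simp at this
  have flip2 : ∀ j ∈ A, (P ((2:Fin 3),j)).2 ∉ A := by
    intro j hj hk
    have h2 : P ((0:Fin 3), (P ((2:Fin 3),j)).2) = (2, j) := by
      rw [← (hplus j hj).2.2]; exact hpair 2 j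
    have := (hplus _ hk).1
    rw [h2] at this
    simp at this
  have flip0' : ∀ j ∉ A, (P ((0:Fin 3),j)).2 ∈ A := by
    intro j hj
    by_contra hk
    have h2 : P ((2:Fin 3), (P ((0:Fin 3),j)).2) = (0, j) := by
      rw [← (hminus j hj).1]; exact hpair 0 j
    have := (hminus _ hk).2.2
    rw [h2] at this
    simp at this
  have h1 : A.card ≤ Aᶜ.card :=
    Finset.card_le_card_of_injOn _ (fun j hj => Finset.mem_compl.2 (flip0 j hj))
      ((hP_invertible 0).injOn)
  have h2 : Aᶜ.card ≤ A.card :=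
    Finset.card_le_card_of_injOn _ (fun j hj => flip0' j (Finset.mem_compl.1 hj))
      ((hP_invertible 0).injOn)
  have hcc : A.card + Aᶜ.card = 2*n := by
    rw [Finset.card_add_card_compl]; simp
  have hcard : A.card = n := by omega
  refine ⟨Equiv.refl (Fin 3), A, hcard, ?_⟩
  intro i x hx
  fin_cases i
  · exact ⟨(hplus x hx).1, flip0 x hx⟩
  · exact ⟨(hplus x hx).2.1, flip1 x hx⟩
  · exact ⟨(hplus x hx).2.2, flip2 x hx⟩
end

section
/- Let G be a group, n ≥ 1, let x, y : Fin n → G, let σ, τ : Equiv.Perm (Fin n) be permutations, and let t, u ∈ G be elements such that t = x s * (y (σ s))⁻¹ for every s : Fin n and u = x s * (y (τ s))⁻¹ for every s : Fin n. Then there exists m with 1 ≤ m ≤ n such that (t * u⁻¹)^m = 1. -/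
/-!
Eliminating `y` gives `t u⁻¹ = xₛ (x (π s))⁻¹` for every `s`, where `π = τ⁻¹ ∘ σ`. These
quotients telescope along the orbit of `π` through any point, so `(t u⁻¹)^m = 1` for the
length `m ≤ n` of that cycle of `π`.
-/

open Function Equiv

theorem mul_inv_eq_mul_inv_symm_apply {ι G : Type*} [Group G] {x y : ι → G} {σ τ : Perm ι}
    {t u : G} (ht : ∀ s, t = x s * (y (σ s))⁻¹) (hu : ∀ s, u = x s * (y (τ s))⁻¹) (s : ι) :
    t * u⁻¹ = x s * (x (τ.symm (σ s)))⁻¹ := by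
  rw [ht s, hu (τ.symm (σ s)), τ.apply_symm_apply]
  group

theorem pow_eq_mul_inv_iterate {ι G : Type*} [Group G] {f : ι → ι} {x : ι → G} {c : G}
    (hc : ∀ s, c = x s * (x (f s))⁻¹) (m : ℕ) (s : ι) : c ^ m = x s * (x (f^[m] s))⁻¹ := by
  induction m generalizing s with
  | zero => simp
  | succ m ih =>
    rw [pow_succ', ih (f s), iterate_succ_apply, hc s]
    group

theorem pow_minimalPeriod_eq_one {ι G : Type*} [Group G] {f : ι → ι} {x : ι → G} {c : G}
    (hc : ∀ s, c = x s * (x (f s))⁻¹) (s : ι) : c ^ minimalPeriod f s = 1 := by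
  rw [pow_eq_mul_inv_iterate hc, iterate_minimalPeriod, mul_inv_cancel]

/-- Bipartite-cycle lemma: if `t = xₛ (y (σ s))⁻¹` and `u = xₛ (y (τ s))⁻¹` for all
`s : Fin n`, with `σ, τ` permutations, then `(t u⁻¹)^m = 1` for some `1 ≤ m ≤ n`. -/
theorem bipartite_cycle_lemma {G : Type*} [Group G] (n : ℕ) (hn : 1 ≤ n)
    (x y : Fin n → G) (σ τ : Equiv.Perm (Fin n)) (t u : G)
    (ht : ∀ s : Fin n, t = x s * (y (σ s))⁻¹)
    (hu : ∀ s : Fin n, u = x s * (y (τ s))⁻¹) :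
    ∃ m : ℕ, 1 ≤ m ∧ m ≤ n ∧ (t * u⁻¹) ^ m = 1 := by
  let π : Perm (Fin n) := σ.trans τ.symm
  let s₀ : Fin n := ⟨0, hn⟩
  have hcycle : ∀ s, t * u⁻¹ = x s * (x (π s))⁻¹ := mul_inv_eq_mul_inv_symm_apply ht hu
  refine ⟨minimalPeriod π s₀, ?_, ?_, pow_minimalPeriod_eq_one hcycle s₀⟩
  · exact minimalPeriod_pos_of_mem_periodicPts (π.injective.mem_periodicPts s₀)
  · simpa using minimalPeriod_le_card (f := π) (x := s₀)
end

section
/- Let n ≥ 2 and let P be a pairing involution on Fin n × Fin n (a square n×n pairing matrix). Then there exist a row i : Fin n and distinct columns j ≠ j' : Fin n such that (P (i,j)).1 = (P (i,j')).1. Consequently, the associated automaton B_C, whose output map at state i sends the letter j to (P (i,j)).1, is never invertible. -/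
theorem Finite.not_injective_of_forall_ne {α : Type*} [Finite α] {f : α → α} {a : α}
    (h : ∀ x, f x ≠ a) : ¬ Function.Injective f :=
  fun hf => (Finite.surjective_of_injective hf a).elim h

theorem not_injective_row_partner {α : Type*} [Finite α] (P : α × α → α × α)
    (hP_row : ∀ p, (P p).1 ≠ p.1) (i : α) :
    ¬ Function.Injective fun j => (P (i, j)).1 :=
  Finite.not_injective_of_forall_ne fun j => hP_row (i, j)

theorem square_pairing_BC_not_invertible_general (n : ℕ) (hn : 2 ≤ n)
    (P : Fin n × Fin n → Fin n × Fin n)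
    (hP_row : ∀ p, (P p).1 ≠ p.1) :
    (∃ (i : Fin n) (j j' : Fin n), j ≠ j' ∧ (P (i, j)).1 = (P (i, j')).1) ∧
      ¬ ∀ i : Fin n, Function.Injective (fun j : Fin n => (P (i, j)).1) := by
  have hrow := not_injective_row_partner P hP_row
  let i₀ : Fin n := ⟨0, by omega⟩
  obtain ⟨j, j', hP_eq, hne⟩ := Function.not_injective_iff.mp (hrow i₀)
  exact ⟨⟨i₀, j, j', hne, hP_eq⟩, fun h => hrow i₀ (h i₀)⟩

/-- For a square `n × n` pairing involution (`n ≥ 2`), some row contains two distinct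
columns whose partners lie in the same row; consequently the associated automaton
`B_C`, whose output map at state `i` sends `j` to `(P (i,j)).1`, is never invertible. -/
theorem square_pairing_BC_not_invertible (n : ℕ) (hn : 2 ≤ n)
    (P : Fin n × Fin n → Fin n × Fin n)
    (hP_invol : ∀ p, P (P p) = p)
    (hP_nofix : ∀ p, P p ≠ p)
    (hP_row : ∀ p, (P p).1 ≠ p.1)
    (hP_col : ∀ p, (P p).2 ≠ p.2) :
    (∃ (i : Fin n) (j j' : Fin n), j ≠ j' ∧ (P (i, j)).1 = (P (i, j')).1) ∧
      ¬ ∀ i : Fin n, Function.Injective (fun j : Fin n => (P (i, j)).1) :=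
  square_pairing_BC_not_invertible_general n hn P hP_row
end
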